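/- Let λ be a partition of n = p + q, written λ = (i_1^{m(i_1)}, …, i_k^{m(i_k)}) with distinct parts i_1 > ⋯ > i_k > 0. For 1 ≤ s ≤ m let r_s be the number of distinct values among λ_1, …, λ_{k_s} (so 0 ≤ r_1 < r_2 < ⋯ < r_m ≤ k, with r_1 = 0 when all parts of λ are even; set r_0 = 0). Then there is an isomorphism of graphs Γ(λ;p,q) ≅ ⨿_{𝐩 = (p_1,…,p_m) ∈ P(λ;p,q)} Z_𝐩, where Z_𝐩 = A(m(i_1), …, m(i_{r_1}); p_1) × A(m(i_{r_1+1}), …, m(i_{r_2}); p_2) × ⋯ × A(m(i_{r_{m−1}+1}), …, m(i_{r_m}); p_m) × C(m(i_{r_m+1}), …, m(i_k)), the factor C(…) being omitted (taken to be the one-point graph) when r_m = k, and an empty-parameter factor A(;0) being the one-point graph. -/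

import Mathlib

open Finset

/-- A partition of `n`, given by the function `l` listing its parts in weakly
decreasing order: `l j = λ_j` is the `j`-th part for `1 ≤ j ≤ len`, and
`l j = 0` for `j > len`. -/
structure PartitionData : Type where
  l : ℕ → ℕ
  len : ℕ
  anti : ∀ j, 1 ≤ j → l (j + 1) ≤ l j
  pos : ∀ j, 1 ≤ j → (0 < l j ↔ j ≤ len)

namespace PartitionData

/-- The multiplicity `m(i)` of `i` as a part of the partition. -/
def mult (P : PartitionData) (i : ℕ) : ℕ :=
  ((Finset.Icc 1 P.len).filter (fun j => P.l j = i)).card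

/-- The finite set of (distinct) parts of the partition. -/
def partsSet (P : PartitionData) : Finset ℕ :=
  (Finset.Icc 1 P.len).image P.l

/-- The sum of the parts (i.e. the number `n` the partition partitions). -/
def boxSum (P : PartitionData) : ℕ := ∑ j ∈ Finset.Icc 1 P.len, P.l j

/-- The number of odd parts of the partition. -/
def oddCount (P : PartitionData) : ℕ :=
  ((Finset.Icc 1 P.len).filter (fun j => Odd (P.l j))).card

end PartitionData

/-- A signed Young diagram of shape `P` and signature `(p, q)`, encoded by the
function `f` sending each part length `i` to `m_T⁺(i)`, the number of rows of
length `i` whose leading sign is `+`.  A row of length `i` with leading sign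
`+` has `(i+1)/2` plus-boxes and `i/2` minus-boxes, and vice versa. -/
structure SYD (P : PartitionData) (p q : ℕ) : Type where
  f : ℕ → ℕ
  le_mult : ∀ i, f i ≤ P.mult i
  plus_eq : ∑ i ∈ P.partsSet, (f i * ((i + 1) / 2) + (P.mult i - f i) * (i / 2)) = p
  minus_eq : ∑ i ∈ P.partsSet, (f i * (i / 2) + (P.mult i - f i) * ((i + 1) / 2)) = q

/-- `i` and `j` are consecutive distinct parts: `i > j` with no part strictly
in between (so if the distinct parts are `i_1 > ⋯ > i_k`, the pairs are
`(i_r, i_{r+1})`). -/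
def Consec (P : PartitionData) (i j : ℕ) : Prop :=
  i ∈ P.partsSet ∧ j ∈ P.partsSet ∧ j < i ∧ ∀ x ∈ P.partsSet, ¬ (j < x ∧ x < i)

/-- `j` is the smallest part `i_k`. -/
def IsMinPart (P : PartitionData) (j : ℕ) : Prop :=
  j ∈ P.partsSet ∧ ∀ x ∈ P.partsSet, j ≤ x

/-- Adjacency of signed Young diagrams with step `c`:
`π(T) - π(T') ∈ {±c(e_r - e_{r+1})} ∪ {±c e_k}` in the coordinates indexed by
the distinct parts `i_1 > ⋯ > i_k`. -/
def AdjRel (P : PartitionData) {p q : ℕ} (c : ℕ) (T T' : SYD P p q) : Prop :=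
  (∃ i j, Consec P i j ∧ (∀ x, x ≠ i → x ≠ j → T.f x = T'.f x) ∧
    ((T.f i = T'.f i + c ∧ T'.f j = T.f j + c) ∨
      (T'.f i = T.f i + c ∧ T.f j = T'.f j + c)))
  ∨ (∃ j, IsMinPart P j ∧ (∀ x, x ≠ j → T.f x = T'.f x) ∧
      (T.f j = T'.f j + c ∨ T'.f j = T.f j + c))

/-- The orbit graph `Γ(λ;p,q)` (type AIII). -/
def orbitGraph (P : PartitionData) (p q : ℕ) : SimpleGraph (SYD P p q) :=
  SimpleGraph.fromRel (AdjRel P 1)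

/-- The set `{j : 1 ≤ j ≤ ℓ, λ_j - λ_{j+1} odd}` defining `k_1 < ⋯ < k_m`. -/
def Kset (P : PartitionData) : Finset ℕ :=
  (Finset.Icc 1 P.len).filter (fun j => Odd (P.l j - P.l (j + 1)))

/-- The parameter set `P(λ;p,q)`. -/
def Pset (P : PartitionData) (p q m : ℕ) (k : ℕ → ℕ) : Set (ℕ → ℕ) :=
  {ps | (∀ s, ¬ (1 ≤ s ∧ s ≤ m) → ps s = 0) ∧
    (∀ s, 1 ≤ s → s ≤ m → ps s ≤ k s - k (s - 1)) ∧
    2 * (∑ s ∈ (Finset.Icc 1 m).filter (fun s => 1 ≤ k s ∧ Odd (P.l (k s))),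
        (ps s : ℤ)) - (P.oddCount : ℤ) = (p : ℤ) - (q : ℤ)}

/-- The edge relation of the box product
`A(m(i_1),…,m(i_{r_1}); p_1) × ⋯ × A(…; p_m) × C(m(i_{r_m+1}),…,m(i_{k'}))`:
two tuples are adjacent iff they differ by `±(e_t - e_{t+1})` with `t, t+1` in
the same block (blocks `(r_{s-1}, r_s]` for the `A` factors, `(r_m, k']` for
the `C` factor), or by `±e_{k'}` if the `C` factor is present (`r_m < k'`). -/
def MoveRel (k' m : ℕ) (r : ℕ → ℕ) (a b : ℕ → ℕ) : Prop :=
  (∃ t, 1 ≤ t ∧ t + 1 ≤ k' ∧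
    ((∃ s, 1 ≤ s ∧ s ≤ m ∧ r (s - 1) < t ∧ t + 1 ≤ r s) ∨ r m < t) ∧
    (∀ x, x ≠ t → x ≠ t + 1 → a x = b x) ∧
    ((a t = b t + 1 ∧ b (t + 1) = a (t + 1) + 1) ∨
      (b t = a t + 1 ∧ a (t + 1) = b (t + 1) + 1)))
  ∨ (r m < k' ∧ (∀ x, x ≠ k' → a x = b x) ∧ (a k' = b k' + 1 ∨ b k' = a k' + 1))

/-- The vertex condition of the product graph `Z_𝐩`: tuples
`(a_1, …, a_{k'})` with `0 ≤ a_t ≤ m(i_t)` whose block sums are prescribed by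
`𝐩` (for the `A` factors; the coordinates in `(r_m, k']` belonging to the `C`
factor are unconstrained). -/
def ZCond (P : PartitionData) (k' m : ℕ) (iseq r : ℕ → ℕ) (ps a : ℕ → ℕ) : Prop :=
  (∀ t, ¬ (1 ≤ t ∧ t ≤ k') → a t = 0) ∧
  (∀ t, 1 ≤ t → t ≤ k' → a t ≤ P.mult (iseq t)) ∧
  (∀ s, 1 ≤ s → s ≤ m → ∑ t ∈ Finset.Icc (r (s - 1) + 1) (r s), a t = ps s)


/-! The map `T ↦ π(T)` identifies signed Young diagrams of shape `λ` with tuples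
`0 ≤ a_t ≤ m(i_t)`. As `|λ| = p + q`, the signature only constrains the number of `+`-led rows
of odd length. The odd drops `k_1 < ⋯ < k_m` of `λ` cut the distinct parts into blocks of
constant parity, of total multiplicities `k_s - k_{s-1}`, and the parts after the last block are
even; so the signature is a condition on the block sums `𝐩` of the odd blocks, which gives
`P(λ;p,q)`. An edge of `Γ(λ;p,q)` keeps that count fixed: a move `e_r - e_{r+1}` joins two parts
of equal parity, hence inside one block or after the last one, and a move `±e_k` needs an even
smallest part, i.e. `r_m < k`. -/

section Sums

variable {M : Type*} [AddCommMonoid M]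

theorem sum_Ioc_blocks (g : ℕ → M) {r : ℕ → ℕ} {n : ℕ}
    (hr : ∀ s s', s ≤ s' → s' ≤ n → r s ≤ r s') :
    ∑ s ∈ Icc 1 n, ∑ t ∈ Ioc (r (s - 1)) (r s), g t = ∑ t ∈ Ioc (r 0) (r n), g t := by
  induction n with
  | zero => simp
  | succ n ih =>
    rw [sum_Icc_succ_top (by omega), ih fun s s' h h' => hr s s' h (by omega), Nat.add_sub_cancel]
    exact sum_Ioc_consecutive g (hr 0 n (by omega) (by omega)) (hr n (n + 1) (by omega) le_rfl)

theorem sum_eq_sum_of_eq_off_pair {I : Finset ℕ} {a b : ℕ → M} {t : ℕ}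
    (hagree : ∀ x, x ≠ t → x ≠ t + 1 → a x = b x)
    (hval : a t + a (t + 1) = b t + b (t + 1))
    (hI : t ∈ I ↔ t + 1 ∈ I) : ∑ x ∈ I, a x = ∑ x ∈ I, b x := by
  by_cases ht : t ∈ I
  · have hsub : {t, t + 1} ⊆ I := by simp [insert_subset_iff, ht, hI.mp ht]
    rw [← sum_sdiff hsub, ← sum_sdiff hsub (f := b), sum_pair (by omega), sum_pair (by omega),
      hval]
    congr 1
    refine sum_congr rfl fun x hx => ?_
    simp only [mem_sdiff, mem_insert, mem_singleton, not_or] at hx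
    exact hagree x hx.2.1 hx.2.2
  · exact sum_congr rfl fun x hx =>
      hagree x (ne_of_mem_of_not_mem hx ht) (ne_of_mem_of_not_mem hx (mt hI.mpr ht))

theorem eq_of_sum_eq_of_eqOn_erase {M : Type*} [AddCancelCommMonoid M] {S : Finset ℕ}
    {a b : ℕ → M} {i : ℕ} (hi : i ∈ S) (h : ∀ x ∈ S, x ≠ i → a x = b x)
    (hsum : ∑ x ∈ S, a x = ∑ x ∈ S, b x) : a i = b i := by
  rw [← add_sum_erase S a hi, ← add_sum_erase S b hi,
    sum_congr rfl fun x hx => h x (mem_of_mem_erase hx) (ne_of_mem_erase hx)] at hsum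
  exact add_right_cancel hsum

end Sums

namespace PartitionData

variable (P : PartitionData)

theorem l_le_l {j j' : ℕ} (hj : 1 ≤ j) (h : j ≤ j') : P.l j' ≤ P.l j := by
  induction j', h using Nat.le_induction with
  | base => exact le_rfl
  | succ n hn ih => exact (P.anti n (hj.trans hn)).trans ih

theorem l_eq_zero {j : ℕ} (hj : 1 ≤ j) (h : P.len < j) : P.l j = 0 := by
  have := P.pos j hj
  omega

theorem mem_partsSet {i : ℕ} :
    i ∈ P.partsSet ↔ ∃ j, 1 ≤ j ∧ j ≤ P.len ∧ P.l j = i := by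
  simp [partsSet, and_assoc]

theorem l_mem_partsSet {j : ℕ} (h1 : 1 ≤ j) (h2 : j ≤ P.len) : P.l j ∈ P.partsSet :=
  P.mem_partsSet.mpr ⟨j, h1, h2, rfl⟩

theorem mult_eq_zero {i : ℕ} (h : i ∉ P.partsSet) : P.mult i = 0 := by
  rw [mult, card_eq_zero, filter_eq_empty_iff]
  rintro j hj rfl
  exact h (mem_image_of_mem _ hj)

theorem sum_rows_eq_sum_parts (F : ℕ → ℕ) :
    ∑ j ∈ Icc 1 P.len, F (P.l j) = ∑ i ∈ P.partsSet, P.mult i * F i :=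
  sum_comp F P.l

theorem boxSum_eq : P.boxSum = ∑ i ∈ P.partsSet, P.mult i * i :=
  P.sum_rows_eq_sum_parts id

theorem oddCount_eq : P.oddCount = ∑ i ∈ P.partsSet with Odd i, P.mult i := by
  rw [oddCount, card_filter, P.sum_rows_eq_sum_parts (fun i => if Odd i then 1 else 0),
    sum_filter]
  simp

def distinctCount (j : ℕ) : ℕ := ((Icc 1 j).image P.l).card

theorem distinctCount_mono {j j' : ℕ} (h : j ≤ j') : P.distinctCount j ≤ P.distinctCount j' :=
  card_le_card (image_subset_image (Icc_subset_Icc_right h))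

theorem distinctCount_zero : P.distinctCount 0 = 0 := rfl

theorem one_le_distinctCount {j : ℕ} (hj : 1 ≤ j) : 1 ≤ P.distinctCount j :=
  card_pos.mpr ((nonempty_Icc.mpr hj).image _)

theorem distinctCount_len : P.distinctCount P.len = P.partsSet.card := rfl

theorem image_Icc_l {j : ℕ} (h1 : 1 ≤ j) (h2 : j ≤ P.len) :
    (Icc 1 j).image P.l = {x ∈ P.partsSet | P.l j ≤ x} := by
  ext x
  simp only [mem_filter, mem_image, mem_Icc, P.mem_partsSet]
  constructor
  · rintro ⟨u, ⟨hu1, hu2⟩, rfl⟩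
    exact ⟨⟨u, hu1, hu2.trans h2, rfl⟩, P.l_le_l hu1 hu2⟩
  · rintro ⟨⟨u, hu1, -, rfl⟩, hle⟩
    rcases le_or_gt u j with h | h
    · exact ⟨u, ⟨hu1, h⟩, rfl⟩
    · exact ⟨j, ⟨h1, le_rfl⟩, le_antisymm hle (P.l_le_l h1 h.le)⟩

theorem distinctCount_lt_of_l_lt {j j' : ℕ} (h1 : 1 ≤ j) (hjj' : j < j') (h2 : j' ≤ P.len)
    (hlt : P.l j' < P.l j) : P.distinctCount j < P.distinctCount j' := by
  rw [distinctCount, distinctCount, P.image_Icc_l h1 (by omega), P.image_Icc_l (by omega) h2]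
  refine card_lt_card ⟨fun x hx => ?_, fun hsub => ?_⟩
  · simp only [mem_filter] at hx ⊢
    exact ⟨hx.1, by omega⟩
  · have := (mem_filter.mp (hsub (mem_filter.mpr ⟨P.l_mem_partsSet (by omega) h2, le_rfl⟩))).2
    omega

theorem distinctCount_succ_le (j : ℕ) : P.distinctCount (j + 1) ≤ P.distinctCount j + 1 := by
  rw [distinctCount, distinctCount, ← insert_Icc_right_eq_Icc_add_one (by omega : 1 ≤ j + 1),
    image_insert]
  exact card_insert_le _ _

theorem mem_Kset {x : ℕ} :
    x ∈ Kset P ↔ 1 ≤ x ∧ x ≤ P.len ∧ Odd (P.l x - P.l (x + 1)) := by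
  simp [Kset, and_assoc]

theorem l_lt_of_mem_Kset {x j : ℕ} (hx : x ∈ Kset P) (h : x < j) : P.l j < P.l x := by
  obtain ⟨hx1, -, hodd⟩ := P.mem_Kset.mp hx
  have := P.l_le_l (j := x + 1) (by omega) h
  have := Nat.pos_of_ne_zero (fun h0 => Nat.not_odd_zero (h0 ▸ hodd))
  omega

theorem odd_l_succ_iff_of_mem_Kset {x : ℕ} (hx : x ∈ Kset P) :
    Odd (P.l (x + 1)) ↔ ¬ Odd (P.l x) := by
  obtain ⟨hx1, -, hodd⟩ := P.mem_Kset.mp hx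
  rw [Nat.odd_sub (P.anti x hx1), ← Nat.not_odd_iff_even] at hodd
  tauto

theorem odd_l_succ_iff_of_notMem_Kset {x : ℕ} (hx1 : 1 ≤ x) (hx : x ∉ Kset P) :
    Odd (P.l (x + 1)) ↔ Odd (P.l x) := by
  by_cases hlen : x ≤ P.len
  · have hodd : ¬ Odd (P.l x - P.l (x + 1)) := fun h => hx (P.mem_Kset.mpr ⟨hx1, hlen, h⟩)
    rw [Nat.odd_sub (P.anti x hx1), ← Nat.not_odd_iff_even] at hodd
    tauto
  · rw [P.l_eq_zero hx1 (by omega), P.l_eq_zero (by omega) (by omega)]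

theorem odd_l_iff_of_forall_notMem_Kset {j j' : ℕ} (hj : 1 ≤ j) (h : j ≤ j')
    (hK : ∀ x ∈ Kset P, ¬ (j ≤ x ∧ x < j')) : Odd (P.l j') ↔ Odd (P.l j) := by
  induction j', h using Nat.le_induction with
  | base => rfl
  | succ n hn ih =>
    rw [P.odd_l_succ_iff_of_notMem_Kset (hj.trans hn) (fun hn' => hK n hn' ⟨hn, by omega⟩)]
    exact ih fun x hx hxn => hK x hx ⟨hxn.1, by omega⟩

theorem not_odd_l_of_forall_mem_Kset_lt {j : ℕ} (hj : 1 ≤ j) (hK : ∀ x ∈ Kset P, x < j) :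
    ¬ Odd (P.l j) := by
  rw [← P.odd_l_iff_of_forall_notMem_Kset hj (Nat.le_add_right j P.len)
    (fun x hx hxj => (hK x hx).not_ge hxj.1), P.l_eq_zero (by omega) (by omega)]
  exact Nat.not_odd_zero

end PartitionData

section Signature

variable (P : PartitionData)

def plusCount (f : ℕ → ℕ) : ℕ :=
  ∑ i ∈ P.partsSet, (f i * ((i + 1) / 2) + (P.mult i - f i) * (i / 2))

def minusCount (f : ℕ → ℕ) : ℕ :=
  ∑ i ∈ P.partsSet, (f i * (i / 2) + (P.mult i - f i) * ((i + 1) / 2))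

variable {P} {f : ℕ → ℕ}

theorem plusCount_add_minusCount (hf : ∀ i, f i ≤ P.mult i) :
    plusCount P f + minusCount P f = P.boxSum := by
  rw [plusCount, minusCount, P.boxSum_eq, ← sum_add_distrib]
  refine sum_congr rfl fun i _ => ?_
  have hi : (i + 1) / 2 + i / 2 = i := by omega
  have hfi : f i + (P.mult i - f i) = P.mult i := by have := hf i; omega
  calc _ = (f i + (P.mult i - f i)) * ((i + 1) / 2 + i / 2) := by ring
    _ = P.mult i * i := by rw [hi, hfi]

theorem plusCount_sub_minusCount (hf : ∀ i, f i ≤ P.mult i) :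
    (plusCount P f : ℤ) - minusCount P f
      = 2 * ∑ i ∈ P.partsSet with Odd i, (f i : ℤ) - P.oddCount := by
  have hrow : ∀ i ∈ P.partsSet,
      ((f i * ((i + 1) / 2) + (P.mult i - f i) * (i / 2) : ℕ) : ℤ)
        - ((f i * (i / 2) + (P.mult i - f i) * ((i + 1) / 2) : ℕ) : ℤ)
        = if Odd i then 2 * (f i : ℤ) - P.mult i else 0 := by
    intro i _
    split_ifs with hi
    · have : (i + 1) / 2 = i / 2 + 1 := by obtain ⟨n, rfl⟩ := hi; omega
      push_cast [this, Nat.cast_sub (hf _)]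
      ring
    · have : (i + 1) / 2 = i / 2 := by
        obtain ⟨n, rfl⟩ := Nat.not_odd_iff_even.mp hi; omega
      push_cast [this, Nat.cast_sub (hf _)]
      ring
  rw [plusCount, minusCount, Nat.cast_sum, Nat.cast_sum, ← sum_sub_distrib, sum_congr rfl hrow,
    ← sum_filter, P.oddCount_eq, sum_sub_distrib, mul_sum]
  push_cast
  rfl

theorem signature_eq_iff (hf : ∀ i, f i ≤ P.mult i) {p q : ℕ} (hn : P.boxSum = p + q) :
    plusCount P f = p ∧ minusCount P f = q ↔
      2 * ∑ i ∈ P.partsSet with Odd i, (f i : ℤ) - P.oddCount = (p : ℤ) - q := by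
  have hadd := plusCount_add_minusCount hf
  rw [← plusCount_sub_minusCount hf]
  omega

end Signature

structure PartsEnumeration (P : PartitionData) (k' : ℕ) (iseq : ℕ → ℕ) : Prop where
  strictAntiOn : StrictAntiOn iseq (Set.Icc 1 k')
  image_eq : (Icc 1 k').image iseq = P.partsSet

namespace PartsEnumeration

variable {P : PartitionData} {k' : ℕ} {iseq : ℕ → ℕ} (E : PartsEnumeration P k' iseq)
include E

theorem mem {t : ℕ} (h1 : 1 ≤ t) (h2 : t ≤ k') : iseq t ∈ P.partsSet := by
  rw [← E.image_eq]
  exact mem_image_of_mem _ (mem_Icc.mpr ⟨h1, h2⟩)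

theorem exists_eq {i : ℕ} (hi : i ∈ P.partsSet) :
    ∃ t, 1 ≤ t ∧ t ≤ k' ∧ iseq t = i := by
  rw [← E.image_eq] at hi
  simpa [and_assoc] using hi

theorem lt {t u : ℕ} (h1 : 1 ≤ t) (h : t < u) (h2 : u ≤ k') : iseq u < iseq t :=
  E.strictAntiOn ⟨h1, by omega⟩ ⟨by omega, h2⟩ h

theorem le {t u : ℕ} (h1 : 1 ≤ t) (h : t ≤ u) (h2 : u ≤ k') : iseq u ≤ iseq t :=
  E.strictAntiOn.antitoneOn ⟨h1, by omega⟩ ⟨by omega, h2⟩ h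

theorem injOn : Set.InjOn iseq (Set.Icc 1 k') := E.strictAntiOn.injOn

theorem eq_of_iseq_eq {t u : ℕ} (ht : 1 ≤ t ∧ t ≤ k') (hu : 1 ≤ u ∧ u ≤ k')
    (h : iseq t = iseq u) : t = u :=
  E.injOn ht hu h

theorem card_partsSet : P.partsSet.card = k' := by
  rw [← E.image_eq, card_image_of_injOn (by simpa using E.injOn), Nat.card_Icc,
    Nat.add_sub_cancel]

theorem card_filter_iseq_le {t : ℕ} (h1 : 1 ≤ t) (h2 : t ≤ k') :
    #{x ∈ P.partsSet | iseq t ≤ x} = t := by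
  have him : {x ∈ P.partsSet | iseq t ≤ x} = (Icc 1 t).image iseq := by
    ext x
    simp only [mem_filter, mem_image, mem_Icc]
    constructor
    · rintro ⟨hx, hle⟩
      obtain ⟨u, hu1, hu2, rfl⟩ := E.exists_eq hx
      refine ⟨u, ⟨hu1, ?_⟩, rfl⟩
      by_contra! hc
      exact (E.lt h1 hc hu2).not_ge hle
    · rintro ⟨u, ⟨hu1, hu2⟩, rfl⟩
      exact ⟨E.mem hu1 (hu2.trans h2), E.le hu1 hu2 h2⟩
  rw [him, card_image_of_injOn, Nat.card_Icc, Nat.add_sub_cancel]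
  exact E.injOn.mono (by simpa using Set.Icc_subset_Icc_right h2)

theorem distinctCount_eq_iff {j t : ℕ} (h1 : 1 ≤ j) (h2 : j ≤ P.len) (ht1 : 1 ≤ t)
    (ht2 : t ≤ k') : P.distinctCount j = t ↔ P.l j = iseq t := by
  obtain ⟨u, hu1, hu2, hu⟩ := E.exists_eq (P.l_mem_partsSet h1 h2)
  have hdc : P.distinctCount j = u := by
    rw [PartitionData.distinctCount, P.image_Icc_l h1 h2, ← hu, E.card_filter_iseq_le hu1 hu2]
  rw [hdc, ← hu]
  exact ⟨congrArg iseq, fun h => E.eq_of_iseq_eq ⟨hu1, hu2⟩ ⟨ht1, ht2⟩ h⟩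

theorem distinctCount_le {j : ℕ} (h : j ≤ P.len) : P.distinctCount j ≤ k' :=
  E.card_partsSet ▸ P.distinctCount_mono h

theorem iseq_distinctCount {j : ℕ} (h1 : 1 ≤ j) (h2 : j ≤ P.len) :
    iseq (P.distinctCount j) = P.l j :=
  ((E.distinctCount_eq_iff h1 h2 (P.one_le_distinctCount h1) (E.distinctCount_le h2)).mp rfl).symm

theorem exists_distinctCount_eq {t : ℕ} (h1 : 1 ≤ t) (h2 : t ≤ k') :
    ∃ j, 1 ≤ j ∧ j ≤ P.len ∧ P.distinctCount j = t ∧ P.l j = iseq t := by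
  obtain ⟨j, hj1, hj2, hj⟩ := P.mem_partsSet.mp (E.mem h1 h2)
  exact ⟨j, hj1, hj2, (E.distinctCount_eq_iff hj1 hj2 h1 h2).mpr hj, hj⟩

theorem mult_iseq {t : ℕ} (h1 : 1 ≤ t) (h2 : t ≤ k') :
    P.mult (iseq t) = #{j ∈ Icc 1 P.len | P.distinctCount j = t} := by
  rw [PartitionData.mult]
  congr 1
  refine filter_congr fun j hj => ?_
  rw [E.distinctCount_eq_iff (mem_Icc.mp hj).1 (mem_Icc.mp hj).2 h1 h2]

theorem iseq_distinctCount_succ_of_mem_Kset {x : ℕ} (hx : x ∈ Kset P)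
    (h : P.distinctCount x + 1 ≤ k') : iseq (P.distinctCount x + 1) = P.l (x + 1) := by
  obtain ⟨hx1, hxlen, -⟩ := P.mem_Kset.mp hx
  have hxlen' : x + 1 ≤ P.len := by
    by_contra! hc
    have : P.distinctCount x = k' := by
      rw [show x = P.len by omega, P.distinctCount_len, E.card_partsSet]
    omega
  have hlt := P.distinctCount_lt_of_l_lt hx1 (Nat.lt_add_one x) hxlen'
    (P.l_lt_of_mem_Kset hx (Nat.lt_add_one x))
  have hle := P.distinctCount_succ_le x
  rw [← E.iseq_distinctCount (by omega) hxlen',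
    show P.distinctCount (x + 1) = P.distinctCount x + 1 by omega]

theorem consec {t : ℕ} (h1 : 1 ≤ t) (h2 : t + 1 ≤ k') : Consec P (iseq t) (iseq (t + 1)) := by
  refine ⟨E.mem h1 (by omega), E.mem (by omega) h2, E.lt h1 (Nat.lt_add_one t) h2, ?_⟩
  rintro x hx ⟨hlo, hhi⟩
  obtain ⟨u, hu1, hu2, rfl⟩ := E.exists_eq hx
  rcases le_or_gt u t with h | h
  · exact (E.le hu1 h (by omega)).not_gt hhi
  · exact (E.le (by omega) h hu2).not_gt hlo

theorem exists_of_consec {i j : ℕ} (h : Consec P i j) :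
    ∃ t, 1 ≤ t ∧ t + 1 ≤ k' ∧ iseq t = i ∧ iseq (t + 1) = j := by
  obtain ⟨hi, hj, hji, hbetween⟩ := h
  obtain ⟨t, ht1, ht2, rfl⟩ := E.exists_eq hi
  obtain ⟨u, hu1, hu2, rfl⟩ := E.exists_eq hj
  have htu : t < u := by
    by_contra! h
    exact (E.le hu1 h ht2).not_gt hji
  obtain rfl : u = t + 1 := by
    by_contra h
    exact hbetween _ (E.mem (by omega) (by omega))
      ⟨E.lt (by omega) (by omega) hu2, E.lt ht1 (Nat.lt_add_one t) (by omega)⟩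
  exact ⟨t, ht1, hu2, rfl, rfl⟩

theorem isMinPart (hk' : 1 ≤ k') : IsMinPart P (iseq k') := by
  refine ⟨E.mem hk' le_rfl, fun x hx => ?_⟩
  obtain ⟨u, hu1, hu2, rfl⟩ := E.exists_eq hx
  exact E.le hu1 hu2 le_rfl

theorem exists_of_isMinPart {j : ℕ} (h : IsMinPart P j) : 1 ≤ k' ∧ iseq k' = j := by
  obtain ⟨hj, hmin⟩ := h
  obtain ⟨t, ht1, ht2, rfl⟩ := E.exists_eq hj
  have := hmin _ (E.mem (ht1.trans ht2) le_rfl)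
  exact ⟨ht1.trans ht2, le_antisymm (E.le ht1 ht2 le_rfl) this⟩

end PartsEnumeration

structure OddDropEnumeration (P : PartitionData) (m : ℕ) (k : ℕ → ℕ) : Prop where
  k_zero : k 0 = 0
  strictMonoOn : StrictMonoOn k (Set.Icc 0 m)
  image_eq : (Icc 1 m).image k = Kset P

namespace OddDropEnumeration

variable {P : PartitionData} {m : ℕ} {k : ℕ → ℕ} (D : OddDropEnumeration P m k)
include D

theorem mem_Kset {s : ℕ} (h1 : 1 ≤ s) (h2 : s ≤ m) : k s ∈ Kset P := by
  rw [← D.image_eq]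
  exact mem_image_of_mem _ (mem_Icc.mpr ⟨h1, h2⟩)

theorem exists_eq {x : ℕ} (hx : x ∈ Kset P) : ∃ s, 1 ≤ s ∧ s ≤ m ∧ k s = x := by
  rw [← D.image_eq] at hx
  simpa [and_assoc] using hx

theorem le {s s' : ℕ} (h : s ≤ s') (h' : s' ≤ m) : k s ≤ k s' :=
  D.strictMonoOn.monotoneOn ⟨Nat.zero_le _, by omega⟩ ⟨Nat.zero_le _, h'⟩ h

theorem le_len {s : ℕ} (h : s ≤ m) : k s ≤ P.len := by
  rcases Nat.eq_zero_or_pos s with rfl | hs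
  · rw [D.k_zero]
    exact Nat.zero_le _
  · exact (P.mem_Kset.mp (D.mem_Kset hs h)).2.1

theorem le_k_last {x : ℕ} (hx : x ∈ Kset P) : x ≤ k m := by
  obtain ⟨s, -, hs, rfl⟩ := D.exists_eq hx
  exact D.le hs le_rfl

theorem le_k_pred {s x : ℕ} (hs : s ≤ m) (hx : x ∈ Kset P) (hxs : x < k s) :
    x ≤ k (s - 1) := by
  obtain ⟨s', -, hs', rfl⟩ := D.exists_eq hx
  have : s' < s := by
    by_contra! h
    exact (D.le h hs').not_gt hxs
  exact D.le (by omega) (by omega)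

theorem odd_l_k_last (hm : 1 ≤ m) : Odd (P.l (k m)) := by
  have hK := D.mem_Kset hm le_rfl
  have heven := P.not_odd_l_of_forall_mem_Kset_lt (j := k m + 1) (by omega)
    fun x hx => Nat.lt_add_one_iff.mpr (D.le_k_last hx)
  rw [P.odd_l_succ_iff_of_mem_Kset hK] at heven
  exact not_not.mp heven

variable {r : ℕ → ℕ} (hr : ∀ s ≤ m, r s = P.distinctCount (k s))
include hr

theorem le_k_iff {s j : ℕ} (hs : s ≤ m) (h1 : 1 ≤ j) (h2 : j ≤ P.len) :
    j ≤ k s ↔ P.distinctCount j ≤ r s := by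
  rw [hr s hs]
  refine ⟨P.distinctCount_mono, fun h => ?_⟩
  by_contra! hlt
  rcases Nat.eq_zero_or_pos s with rfl | hs0
  · rw [D.k_zero, P.distinctCount_zero] at h
    exact (P.one_le_distinctCount h1).not_gt (by omega)
  · have hK := D.mem_Kset hs0 hs
    exact h.not_gt (P.distinctCount_lt_of_l_lt (P.mem_Kset.mp hK).1 hlt h2
      (P.l_lt_of_mem_Kset hK hlt))

theorem mem_block_iff {s j : ℕ} (hs : s ≤ m) (h1 : 1 ≤ j) (h2 : j ≤ P.len) :
    (r (s - 1) < P.distinctCount j ∧ P.distinctCount j ≤ r s) ↔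
      (k (s - 1) < j ∧ j ≤ k s) := by
  have := D.le_k_iff hr (s := s - 1) (by omega) h1 h2
  rw [D.le_k_iff hr hs h1 h2]
  omega

theorem r_mono {s s' : ℕ} (h : s ≤ s') (h' : s' ≤ m) : r s ≤ r s' := by
  rw [hr s (h.trans h'), hr s' h']
  exact P.distinctCount_mono (D.le h h')

theorem r_zero : r 0 = 0 := by
  rw [hr 0 (Nat.zero_le _), D.k_zero, P.distinctCount_zero]

end OddDropEnumeration

theorem exists_block {m t : ℕ} {r : ℕ → ℕ} (hr0 : r 0 = 0) (h1 : 1 ≤ t) (h2 : t ≤ r m) :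
    ∃ s, 1 ≤ s ∧ s ≤ m ∧ r (s - 1) < t ∧ t ≤ r s := by
  classical
  have hex : ∃ s, t ≤ r s := ⟨m, h2⟩
  have hpos : Nat.find hex ≠ 0 := fun h0 => by
    have := Nat.find_spec hex
    rw [h0, hr0] at this
    omega
  refine ⟨Nat.find hex, by omega, Nat.find_min' hex h2, ?_, Nat.find_spec hex⟩
  exact not_le.mp (Nat.find_min hex (by omega))

/-- What the isomorphism needs to know about the blocks `(r_{s-1}, r_s]` of indices of distinct
parts; it is established separately when `λ` has no odd drop and when it has some. -/
structure BlockStructure (P : PartitionData) (m k' : ℕ) (k iseq r : ℕ → ℕ) : Prop where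
  r_zero : r 0 = 0
  r_mono : ∀ s s', s ≤ s' → s' ≤ m → r s ≤ r s'
  r_le : r m ≤ k'
  sum_mult : ∀ s, 1 ≤ s → s ≤ m →
    ∑ t ∈ Icc (r (s - 1) + 1) (r s), P.mult (iseq t) = k s - k (s - 1)
  odd_iff : ∀ s, 1 ≤ s → s ≤ m → ∀ t, r (s - 1) < t → t ≤ r s →
    (Odd (iseq t) ↔ 1 ≤ k s ∧ Odd (P.l (k s)))
  not_odd : ∀ t, r m < t → t ≤ k' → ¬ Odd (iseq t)
  block_of_odd_iff : ∀ t, 1 ≤ t → t + 1 ≤ k' → (Odd (iseq t) ↔ Odd (iseq (t + 1))) →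
    (∃ s, 1 ≤ s ∧ s ≤ m ∧ r (s - 1) < t ∧ t + 1 ≤ r s) ∨ r m < t
  r_lt_of_not_odd : 1 ≤ k' → ¬ Odd (iseq k') → r m < k'

theorem PartsEnumeration.blockStructure_of_Kset_eq_empty {P : PartitionData} {k' : ℕ}
    {k iseq r : ℕ → ℕ} (E : PartsEnumeration P k' iseq) (hK : Kset P = ∅) (hk1 : k 1 = 0)
    (hr : ∀ s ≤ 1, r s = 0) : BlockStructure P 1 k' k iseq r := by
  refine ⟨hr 0 (by omega), fun s s' _ hs' => by rw [hr s (by omega), hr s' hs'],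
    by simp [hr], fun s h1 h2 => ?_, fun s h1 h2 t ht1 ht2 => ?_, fun t ht1 ht2 => ?_,
    fun t ht1 _ _ => Or.inr (by rw [hr 1 le_rfl]; omega), fun h _ => by rw [hr 1 le_rfl]; omega⟩
  · obtain rfl : s = 1 := by omega
    simp [hr, hk1]
  · obtain rfl : s = 1 := by omega
    rw [hr 1 le_rfl] at ht2
    omega
  · obtain ⟨j, hj1, -, -, hj⟩ := E.exists_distinctCount_eq (by omega) ht2
    rw [← hj]
    exact P.not_odd_l_of_forall_mem_Kset_lt hj1 (by simp [hK])

namespace OddDropEnumeration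

variable {P : PartitionData} {m k' : ℕ} {k iseq r : ℕ → ℕ} (E : PartsEnumeration P k' iseq)
  (D : OddDropEnumeration P m k) (hr : ∀ s ≤ m, r s = P.distinctCount (k s))
include E D hr

theorem r_le_card {s : ℕ} (hs : s ≤ m) : r s ≤ k' :=
  hr s hs ▸ E.distinctCount_le (D.le_len hs)

theorem sum_mult_block {s : ℕ} (hs : s ≤ m) :
    ∑ t ∈ Icc (r (s - 1) + 1) (r s), P.mult (iseq t) = k s - k (s - 1) := by
  have hrows : ∀ j ∈ Icc (k (s - 1) + 1) (k s), 1 ≤ j ∧ j ≤ P.len := fun j hj =>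
    ⟨by simp only [mem_Icc] at hj; omega, (mem_Icc.mp hj).2.trans (D.le_len hs)⟩
  calc ∑ t ∈ Icc (r (s - 1) + 1) (r s), P.mult (iseq t)
      = ∑ t ∈ Icc (r (s - 1) + 1) (r s),
          #{j ∈ Icc (k (s - 1) + 1) (k s) | P.distinctCount j = t} := by
        refine sum_congr rfl fun t ht => ?_
        rw [mem_Icc] at ht
        rw [E.mult_iseq (by omega) (ht.2.trans (D.r_le_card E hr hs))]
        congr 1
        ext j
        simp only [mem_filter, mem_Icc]
        constructor
        · rintro ⟨⟨hj1, hj2⟩, rfl⟩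
          have := (D.mem_block_iff hr hs hj1 hj2).mp ⟨by omega, ht.2⟩
          exact ⟨by omega, rfl⟩
        · rintro ⟨hj, rfl⟩
          exact ⟨hrows j (mem_Icc.mpr hj), rfl⟩
    _ = #(Icc (k (s - 1) + 1) (k s)) := by
        refine (card_eq_sum_card_fiberwise fun j hj => ?_).symm
        obtain ⟨hj1, hj2⟩ := hrows j hj
        simp only [coe_Icc, Set.mem_Icc] at hj ⊢
        have := (D.mem_block_iff hr hs hj1 hj2).mpr (by omega)
        omega
    _ = k s - k (s - 1) := by simp

theorem odd_iseq_iff {s t : ℕ} (h1 : 1 ≤ s) (h2 : s ≤ m) (ht1 : r (s - 1) < t)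
    (ht2 : t ≤ r s) :
    Odd (iseq t) ↔ 1 ≤ k s ∧ Odd (P.l (k s)) := by
  obtain ⟨j, hj1, hj2, rfl, hj⟩ :=
    E.exists_distinctCount_eq (by omega) (ht2.trans (D.r_le_card E hr h2))
  obtain ⟨hjlo, hjhi⟩ := (D.mem_block_iff hr h2 hj1 hj2).mp ⟨ht1, ht2⟩
  have hK := D.mem_Kset h1 h2
  rw [← hj, ← P.odd_l_iff_of_forall_notMem_Kset hj1 hjhi
    fun x hx hxj => by have := D.le_k_pred h2 hx hxj.2; omega]
  simp [(P.mem_Kset.mp hK).1]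

theorem not_odd_iseq {t : ℕ} (ht1 : r m < t) (ht2 : t ≤ k') : ¬ Odd (iseq t) := by
  obtain ⟨j, hj1, hj2, rfl, hj⟩ := E.exists_distinctCount_eq (by omega) ht2
  have hjk : k m < j := by
    by_contra! h
    exact ht1.not_ge ((D.le_k_iff hr le_rfl hj1 hj2).mp h)
  rw [← hj]
  exact P.not_odd_l_of_forall_mem_Kset_lt hj1 fun x hx => (D.le_k_last hx).trans_lt hjk

/-- Two consecutive distinct parts of equal parity cannot straddle an odd drop `k_s`, since the
parts on both sides of it have opposite parities. -/
theorem block_of_odd_iff {t : ℕ} (ht1 : 1 ≤ t) (ht2 : t + 1 ≤ k')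
    (hpar : Odd (iseq t) ↔ Odd (iseq (t + 1))) :
    (∃ s, 1 ≤ s ∧ s ≤ m ∧ r (s - 1) < t ∧ t + 1 ≤ r s) ∨ r m < t := by
  by_cases htm : r m < t
  · exact Or.inr htm
  obtain ⟨s, hs1, hs2, hlo, hhi⟩ := exists_block (D.r_zero hr) ht1 (not_lt.mp htm)
  refine Or.inl ⟨s, hs1, hs2, hlo, ?_⟩
  by_contra! hts
  have hK := D.mem_Kset hs1 hs2
  have ht : t = P.distinctCount (k s) := by rw [← hr s hs2]; omega
  rw [ht, E.iseq_distinctCount (P.mem_Kset.mp hK).1 (D.le_len hs2),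
    E.iseq_distinctCount_succ_of_mem_Kset hK (by omega), P.odd_l_succ_iff_of_mem_Kset hK] at hpar
  tauto

theorem r_lt_of_not_odd (hk' : 1 ≤ k') (heven : ¬ Odd (iseq k')) : r m < k' := by
  refine lt_of_le_of_ne (D.r_le_card E hr le_rfl) fun hrm => ?_
  have hm : 1 ≤ m := by
    by_contra! h0
    obtain rfl : m = 0 := by omega
    rw [D.r_zero hr] at hrm
    omega
  rw [← hrm, hr m le_rfl, E.iseq_distinctCount (P.mem_Kset.mp (D.mem_Kset hm le_rfl)).1
    (D.le_len le_rfl)] at heven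
  exact heven (D.odd_l_k_last hm)

theorem blockStructure : BlockStructure P m k' k iseq r where
  r_zero := D.r_zero hr
  r_mono _ _ h h' := D.r_mono hr h h'
  r_le := D.r_le_card E hr le_rfl
  sum_mult _ _ hs := D.sum_mult_block E hr hs
  odd_iff _ h1 h2 _ ht1 ht2 := D.odd_iseq_iff E hr h1 h2 ht1 ht2
  not_odd _ ht1 ht2 := D.not_odd_iseq E hr ht1 ht2
  block_of_odd_iff _ ht1 ht2 hpar := D.block_of_odd_iff E hr ht1 ht2 hpar
  r_lt_of_not_odd hk' heven := D.r_lt_of_not_odd E hr hk' heven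

end OddDropEnumeration

namespace SYD

variable {P : PartitionData} {p q : ℕ}

theorem ext {T T' : SYD P p q} (h : T.f = T'.f) : T = T' := by
  cases T
  cases T'
  cases h
  rfl

theorem f_eq_zero (T : SYD P p q) {i : ℕ} (hi : i ∉ P.partsSet) : T.f i = 0 :=
  Nat.eq_zero_of_le_zero (P.mult_eq_zero hi ▸ T.le_mult i)

/-- `p - q` pins down the number of `+`-led rows of odd length. -/
theorem sum_odd_eq (T T' : SYD P p q) :
    ∑ i ∈ P.partsSet with Odd i, T.f i = ∑ i ∈ P.partsSet with Odd i, T'.f i := by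
  have h := plusCount_sub_minusCount T.le_mult
  have h' := plusCount_sub_minusCount T'.le_mult
  rw [show plusCount P T.f = p from T.plus_eq, show minusCount P T.f = q from T.minus_eq] at h
  rw [show plusCount P T'.f = p from T'.plus_eq, show minusCount P T'.f = q from T'.minus_eq] at h'
  exact_mod_cast (by omega : ∑ i ∈ P.partsSet with Odd i, (T.f i : ℤ)
    = ∑ i ∈ P.partsSet with Odd i, (T'.f i : ℤ))

theorem f_eq_of_odd (T T' : SYD P p q) {i : ℕ} (hi : i ∈ P.partsSet) (hodd : Odd i)
    (h : ∀ x, Odd x → x ≠ i → T.f x = T'.f x) : T.f i = T'.f i :=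
  eq_of_sum_eq_of_eqOn_erase (mem_filter.mpr ⟨hi, hodd⟩)
    (fun x hx => h x (mem_filter.mp hx).2) (T.sum_odd_eq T')

theorem mem_partsSet_of_f_ne {T T' : SYD P p q} {i : ℕ} (h : T.f i ≠ T'.f i) :
    i ∈ P.partsSet := by
  by_contra hi
  exact h (by rw [T.f_eq_zero hi, T'.f_eq_zero hi])

theorem not_odd_of_f_ne {T T' : SYD P p q} {j : ℕ} (hagree : ∀ x, x ≠ j → T.f x = T'.f x)
    (hne : T.f j ≠ T'.f j) : ¬ Odd j := fun hodd =>
  hne (T.f_eq_of_odd T' (mem_partsSet_of_f_ne hne) hodd fun x _ hx => hagree x hx)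

theorem odd_iff_odd_of_f_ne {T T' : SYD P p q} {i j : ℕ}
    (hagree : ∀ x, x ≠ i → x ≠ j → T.f x = T'.f x) (hi : T.f i ≠ T'.f i)
    (hj : T.f j ≠ T'.f j) :
    Odd i ↔ Odd j := by
  refine ⟨fun hodd => ?_, fun hodd => ?_⟩ <;> by_contra hodd'
  · exact hi (T.f_eq_of_odd T' (mem_partsSet_of_f_ne hi) hodd
      fun x hx hxi => hagree x hxi fun hxj => hodd' (hxj ▸ hx))
  · exact hj (T.f_eq_of_odd T' (mem_partsSet_of_f_ne hj) hodd
      fun x hx hxj => hagree x (fun hxi => hodd' (hxi ▸ hx)) hxj)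

end SYD

def toTuple (k' : ℕ) (iseq f : ℕ → ℕ) : ℕ → ℕ :=
  fun t => if 1 ≤ t ∧ t ≤ k' then f (iseq t) else 0

def ofTuple (k' : ℕ) (iseq a : ℕ → ℕ) : ℕ → ℕ :=
  fun i => ∑ t ∈ Icc 1 k', if iseq t = i then a t else 0

def blockSums (m : ℕ) (r a : ℕ → ℕ) : ℕ → ℕ :=
  fun s => if 1 ≤ s ∧ s ≤ m then ∑ t ∈ Icc (r (s - 1) + 1) (r s), a t else 0

section Tuples

variable {k' : ℕ} {iseq : ℕ → ℕ}

theorem toTuple_of_mem {f : ℕ → ℕ} {t : ℕ} (h1 : 1 ≤ t) (h2 : t ≤ k') :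
    toTuple k' iseq f t = f (iseq t) :=
  if_pos ⟨h1, h2⟩

theorem toTuple_congr {f g : ℕ → ℕ} {t : ℕ}
    (h : 1 ≤ t → t ≤ k' → f (iseq t) = g (iseq t)) :
    toTuple k' iseq f t = toTuple k' iseq g t := by
  unfold toTuple
  split_ifs with ht
  exacts [h ht.1 ht.2, rfl]

theorem blockSums_eq {m : ℕ} {r a ps : ℕ → ℕ}
    (h0 : ∀ s, ¬ (1 ≤ s ∧ s ≤ m) → ps s = 0)
    (h : ∀ s, 1 ≤ s → s ≤ m → ∑ t ∈ Icc (r (s - 1) + 1) (r s), a t = ps s) :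
    blockSums m r a = ps := by
  funext s
  unfold blockSums
  split_ifs with hs
  exacts [h s hs.1 hs.2, (h0 s hs).symm]

/-- A move of `MoveRel` stays inside one of the `A` blocks, or inside the `C` block. -/
theorem blockSums_eq_of_moveRel {m : ℕ} {r a b : ℕ → ℕ}
    (hr : ∀ s s', s ≤ s' → s' ≤ m → r s ≤ r s') (h : MoveRel k' m r a b) :
    blockSums m r a = blockSums m r b := by
  funext s
  unfold blockSums
  split_ifs with hs
  swap
  · rfl
  have hrs := hr s m hs.2 le_rfl
  rcases h with ⟨t, -, -, hblk, hagree, hval⟩ | ⟨hrm, hagree, -⟩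
  · refine sum_eq_sum_of_eq_off_pair hagree (by omega) ?_
    simp only [mem_Icc]
    rcases hblk with ⟨s₀, hs₀, hs₀m, hlo, hhi⟩ | htail
    · rcases lt_trichotomy s s₀ with hlt | rfl | hgt
      · have := hr s (s₀ - 1) (by omega) (by omega)
        omega
      · omega
      · have := hr s₀ (s - 1) (by omega) (by omega)
        omega
    · omega
  · exact sum_congr rfl fun x hx => hagree x (by simp only [mem_Icc] at hx; omega)

namespace PartsEnumeration

variable {P : PartitionData} (E : PartsEnumeration P k' iseq)
include E

theorem ofTuple_iseq (a : ℕ → ℕ) {t : ℕ} (h1 : 1 ≤ t) (h2 : t ≤ k') :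
    ofTuple k' iseq a (iseq t) = a t := by
  rw [ofTuple, sum_eq_single_of_mem t (mem_Icc.mpr ⟨h1, h2⟩), if_pos rfl]
  intro u hu hne
  exact if_neg fun he => hne (E.eq_of_iseq_eq (mem_Icc.mp hu) ⟨h1, h2⟩ he)

theorem ofTuple_of_notMem (a : ℕ → ℕ) {i : ℕ} (hi : i ∉ P.partsSet) :
    ofTuple k' iseq a i = 0 :=
  sum_eq_zero fun t ht =>
    if_neg fun (he : iseq t = i) => hi (he ▸ E.mem (mem_Icc.mp ht).1 (mem_Icc.mp ht).2)

theorem toTuple_ofTuple {a : ℕ → ℕ} (ha : ∀ t, ¬ (1 ≤ t ∧ t ≤ k') → a t = 0) :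
    toTuple k' iseq (ofTuple k' iseq a) = a := by
  funext t
  unfold toTuple
  split_ifs with ht
  exacts [E.ofTuple_iseq a ht.1 ht.2, (ha t ht).symm]

theorem ofTuple_toTuple {f : ℕ → ℕ} (hf : ∀ i ∉ P.partsSet, f i = 0) :
    ofTuple k' iseq (toTuple k' iseq f) = f := by
  funext i
  by_cases hi : i ∈ P.partsSet
  · obtain ⟨t, h1, h2, rfl⟩ := E.exists_eq hi
    rw [E.ofTuple_iseq _ h1 h2, toTuple_of_mem h1 h2]
  · rw [E.ofTuple_of_notMem _ hi, hf i hi]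

theorem f_eq_of_toTuple_eq {p q : ℕ} {T T' : SYD P p q} {x : ℕ}
    (h : ∀ u, 1 ≤ u → u ≤ k' → iseq u = x →
      toTuple k' iseq T.f u = toTuple k' iseq T'.f u) :
    T.f x = T'.f x := by
  by_cases hx : x ∈ P.partsSet
  · obtain ⟨u, h1, h2, rfl⟩ := E.exists_eq hx
    simpa only [toTuple_of_mem h1 h2] using h u h1 h2 rfl
  · rw [T.f_eq_zero hx, T'.f_eq_zero hx]

theorem adjRel_of_moveRel {m : ℕ} {r : ℕ → ℕ} {p q : ℕ} {T T' : SYD P p q}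
    (h : MoveRel k' m r (toTuple k' iseq T.f) (toTuple k' iseq T'.f)) : AdjRel P 1 T T' := by
  rcases h with ⟨t, ht1, ht2, -, hagree, hval⟩ | ⟨hrm, hagree, hval⟩
  · refine Or.inl ⟨iseq t, iseq (t + 1), E.consec ht1 ht2, fun x hx hx' =>
      E.f_eq_of_toTuple_eq fun u _ _ hu =>
        hagree u (by rintro rfl; exact hx hu.symm) (by rintro rfl; exact hx' hu.symm), ?_⟩
    rwa [toTuple_of_mem ht1 (by omega), toTuple_of_mem ht1 (by omega),
      toTuple_of_mem (by omega) ht2, toTuple_of_mem (by omega) ht2] at hval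
  · have hk' : 1 ≤ k' := by omega
    refine Or.inr ⟨iseq k', E.isMinPart hk', fun x hx =>
      E.f_eq_of_toTuple_eq fun u _ _ hu => hagree u (by rintro rfl; exact hx hu.symm), ?_⟩
    rwa [toTuple_of_mem hk' le_rfl, toTuple_of_mem hk' le_rfl] at hval

end PartsEnumeration

end Tuples

namespace BlockStructure

variable {P : PartitionData} {m k' : ℕ} {k iseq r : ℕ → ℕ}
  (B : BlockStructure P m k' k iseq r)
include B

theorem mem_Icc_of_mem_block {s t : ℕ} (hs : s ≤ m) (ht : t ∈ Icc (r (s - 1) + 1) (r s)) :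
    1 ≤ t ∧ t ≤ k' := by
  have := B.r_mono s m hs le_rfl
  have := B.r_le
  simp only [mem_Icc] at ht
  omega

/-- The odd parts are exactly those indexed by the blocks `s` with `λ_{k_s}` odd. -/
theorem sum_odd_parts (E : PartsEnumeration P k' iseq) (g : ℕ → ℕ) :
    ∑ i ∈ P.partsSet with Odd i, g i =
      ∑ s ∈ Icc 1 m with 1 ≤ k s ∧ Odd (P.l (k s)),
        ∑ t ∈ Icc (r (s - 1) + 1) (r s), g (iseq t) := by
  set G : ℕ → ℕ := fun t => if Odd (iseq t) then g (iseq t) else 0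
  have hparts : ∑ i ∈ P.partsSet with Odd i, g i = ∑ t ∈ Ioc 0 k', G t := by
    rw [sum_filter, ← E.image_eq, sum_image (by simpa using E.injOn),
      ← Icc_add_one_left_eq_Ioc, zero_add]
  have htail : ∑ t ∈ Ioc (r m) k', G t = 0 :=
    sum_eq_zero fun t ht => if_neg (B.not_odd t (mem_Ioc.mp ht).1 (mem_Ioc.mp ht).2)
  have hblock : ∀ s ∈ Icc 1 m, ∑ t ∈ Ioc (r (s - 1)) (r s), G t =
      if 1 ≤ k s ∧ Odd (P.l (k s)) then ∑ t ∈ Icc (r (s - 1) + 1) (r s), g (iseq t)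
      else 0 := by
    intro s hs
    rw [mem_Icc] at hs
    rw [← Icc_add_one_left_eq_Ioc]
    split_ifs with hodd
    · exact sum_congr rfl fun t ht =>
        if_pos ((B.odd_iff s hs.1 hs.2 t (by simp only [mem_Icc] at ht; omega) (mem_Icc.mp ht).2).mpr hodd)
    · exact sum_eq_zero fun t ht =>
        if_neg (mt (B.odd_iff s hs.1 hs.2 t (by simp only [mem_Icc] at ht; omega) (mem_Icc.mp ht).2).mp hodd)
  rw [hparts, ← sum_Ioc_consecutive G (Nat.zero_le (r m)) B.r_le, htail, add_zero, ← B.r_zero,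
    ← sum_Ioc_blocks G B.r_mono, sum_congr rfl hblock, sum_filter]

variable {p q : ℕ}

theorem blockSums_toTuple {f : ℕ → ℕ} {s : ℕ} (h1 : 1 ≤ s) (h2 : s ≤ m) :
    blockSums m r (toTuple k' iseq f) s = ∑ t ∈ Icc (r (s - 1) + 1) (r s), f (iseq t) := by
  rw [blockSums, if_pos ⟨h1, h2⟩]
  exact sum_congr rfl fun t ht =>
    toTuple_of_mem (B.mem_Icc_of_mem_block h2 ht).1 (B.mem_Icc_of_mem_block h2 ht).2

theorem toTuple_mem_vertexSet (E : PartsEnumeration P k' iseq) (T : SYD P p q) :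
    blockSums m r (toTuple k' iseq T.f) ∈ Pset P p q m k ∧
      ZCond P k' m iseq r (blockSums m r (toTuple k' iseq T.f)) (toTuple k' iseq T.f) := by
  have hsig := plusCount_sub_minusCount T.le_mult
  rw [show plusCount P T.f = p from T.plus_eq, show minusCount P T.f = q from T.minus_eq] at hsig
  have hodd : ∑ s ∈ Icc 1 m with 1 ≤ k s ∧ Odd (P.l (k s)),
      blockSums m r (toTuple k' iseq T.f) s = ∑ i ∈ P.partsSet with Odd i, T.f i := by
    rw [B.sum_odd_parts E]
    refine sum_congr rfl fun s hs => ?_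
    obtain ⟨h1, h2⟩ := mem_Icc.mp (mem_filter.mp hs).1
    exact B.blockSums_toTuple h1 h2
  refine ⟨⟨fun s hs => if_neg hs, fun s h1 h2 => ?_, ?_⟩, fun t ht => if_neg ht,
    fun t h1 h2 => ?_, fun s h1 h2 => (if_pos ⟨h1, h2⟩).symm⟩
  · rw [B.blockSums_toTuple h1 h2, ← B.sum_mult s h1 h2]
    exact sum_le_sum fun t _ => T.le_mult _
  · rw [hsig]
    exact_mod_cast congrArg (fun x : ℕ => 2 * (x : ℤ) - P.oddCount) hodd
  · rw [toTuple_of_mem h1 h2]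
    exact T.le_mult _

theorem ofTuple_isSYD (E : PartsEnumeration P k' iseq) (hn : P.boxSum = p + q)
    {ps a : ℕ → ℕ} (hps : ps ∈ Pset P p q m k) (hz : ZCond P k' m iseq r ps a) :
    (∀ i, ofTuple k' iseq a i ≤ P.mult i) ∧
      plusCount P (ofTuple k' iseq a) = p ∧ minusCount P (ofTuple k' iseq a) = q := by
  obtain ⟨-, hle, hblock⟩ := hz
  have hf : ∀ i, ofTuple k' iseq a i ≤ P.mult i := fun i => by
    by_cases hi : i ∈ P.partsSet
    · obtain ⟨t, h1, h2, rfl⟩ := E.exists_eq hi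
      rw [E.ofTuple_iseq a h1 h2]
      exact hle t h1 h2
    · rw [E.ofTuple_of_notMem a hi]
      exact Nat.zero_le _
  have hodd : ∑ i ∈ P.partsSet with Odd i, ofTuple k' iseq a i
      = ∑ s ∈ Icc 1 m with 1 ≤ k s ∧ Odd (P.l (k s)), ps s := by
    rw [B.sum_odd_parts E]
    refine sum_congr rfl fun s hs => ?_
    obtain ⟨h1, h2⟩ := mem_Icc.mp (mem_filter.mp hs).1
    rw [← hblock s h1 h2]
    exact sum_congr rfl fun t ht =>
      E.ofTuple_iseq a (B.mem_Icc_of_mem_block h2 ht).1 (B.mem_Icc_of_mem_block h2 ht).2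
  refine ⟨hf, (signature_eq_iff hf hn).mpr ?_⟩
  rw [← hps.2.2]
  exact_mod_cast congrArg (fun x : ℕ => 2 * (x : ℤ) - P.oddCount) hodd

def vertexEquiv (E : PartsEnumeration P k' iseq) (hn : P.boxSum = p + q) :
    SYD P p q ≃
      {pa : (ℕ → ℕ) × (ℕ → ℕ) //
        pa.1 ∈ Pset P p q m k ∧ ZCond P k' m iseq r pa.1 pa.2} where
  toFun T := ⟨(blockSums m r (toTuple k' iseq T.f), toTuple k' iseq T.f),
    B.toTuple_mem_vertexSet E T⟩
  invFun x :=
    have h := B.ofTuple_isSYD E hn x.2.1 x.2.2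
    ⟨ofTuple k' iseq x.1.2, h.1, h.2.1, h.2.2⟩
  left_inv T := SYD.ext (E.ofTuple_toTuple fun _ => T.f_eq_zero)
  right_inv := by
    rintro ⟨⟨ps, a⟩, hps, hz⟩
    have ha : toTuple k' iseq (ofTuple k' iseq a) = a := E.toTuple_ofTuple hz.1
    simp only [ha, blockSums_eq hps.1 hz.2.2]

theorem moveRel_of_adjRel (E : PartsEnumeration P k' iseq) {T T' : SYD P p q}
    (h : AdjRel P 1 T T') : MoveRel k' m r (toTuple k' iseq T.f) (toTuple k' iseq T'.f) := by
  rcases h with ⟨i, j, hc, hagree, hval⟩ | ⟨j, hmin, hagree, hval⟩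
  · obtain ⟨t, ht1, ht2, rfl, rfl⟩ := E.exists_of_consec hc
    have hpar := SYD.odd_iff_odd_of_f_ne hagree (by omega) (by omega)
    refine Or.inl ⟨t, ht1, ht2, B.block_of_odd_iff t ht1 ht2 hpar, fun u hu hu' =>
      toTuple_congr fun h1 h2 => hagree _
        (fun he => hu (E.eq_of_iseq_eq ⟨h1, h2⟩ ⟨ht1, by omega⟩ he))
        (fun he => hu' (E.eq_of_iseq_eq ⟨h1, h2⟩ ⟨by omega, ht2⟩ he)), ?_⟩
    rwa [toTuple_of_mem ht1 (by omega), toTuple_of_mem ht1 (by omega),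
      toTuple_of_mem (by omega) ht2, toTuple_of_mem (by omega) ht2]
  · obtain ⟨hk', rfl⟩ := E.exists_of_isMinPart hmin
    have heven := SYD.not_odd_of_f_ne hagree (by omega)
    refine Or.inr ⟨B.r_lt_of_not_odd hk' heven, fun u hu => toTuple_congr fun h1 h2 =>
      hagree _ fun he => hu (E.eq_of_iseq_eq ⟨h1, h2⟩ ⟨hk', le_rfl⟩ he), ?_⟩
    rwa [toTuple_of_mem hk' le_rfl, toTuple_of_mem hk' le_rfl]

theorem vertexEquiv_rel_iff (E : PartsEnumeration P k' iseq) (hn : P.boxSum = p + q)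
    {T T' : SYD P p q} :
    ((B.vertexEquiv E hn T).1.1 = (B.vertexEquiv E hn T').1.1 ∧
      MoveRel k' m r (B.vertexEquiv E hn T).1.2 (B.vertexEquiv E hn T').1.2) ↔
      AdjRel P 1 T T' :=
  ⟨fun h => E.adjRel_of_moveRel h.2,
    fun h => ⟨blockSums_eq_of_moveRel B.r_mono (B.moveRel_of_adjRel E h),
      B.moveRel_of_adjRel E h⟩⟩

end BlockStructure

/-- Here `iseq` enumerates the distinct parts `i_1 > ⋯ > i_{k'}`, and the disjoint union of the
products `Z_𝐩` is realized as the graph on pairs `(𝐩, a)` with `a` a vertex of `Z_𝐩`, two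
pairs being adjacent iff they have the same `𝐩` and their tuples differ by an allowed move. -/
theorem stmt6 (P : PartitionData) (p q m k' : ℕ) (k iseq r : ℕ → ℕ)
    (hn : P.boxSum = p + q) (hk0 : k 0 = 0)
    (hk : (Kset P = ∅ ∧ m = 1 ∧ k 1 = 0) ∨
      (Kset P ≠ ∅ ∧ StrictMonoOn k (Set.Icc 0 m) ∧
        (Finset.Icc 1 m).image k = Kset P))
    (hiseq : StrictAntiOn iseq (Set.Icc 1 k'))
    (hiseqim : (Finset.Icc 1 k').image iseq = P.partsSet)
    (hr0 : r 0 = 0)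
    (hr : ∀ s, 1 ≤ s → s ≤ m → r s = ((Finset.Icc 1 (k s)).image P.l).card) :
    Nonempty
      (orbitGraph P p q ≃g
        SimpleGraph.fromRel
          (fun (x y : {pa : (ℕ → ℕ) × (ℕ → ℕ) //
              pa.1 ∈ Pset P p q m k ∧ ZCond P k' m iseq r pa.1 pa.2}) =>
            x.1.1 = y.1.1 ∧ MoveRel k' m r x.1.2 y.1.2)) := by
  have E : PartsEnumeration P k' iseq := ⟨hiseq, hiseqim⟩
  have hr' : ∀ s ≤ m, r s = P.distinctCount (k s) := fun s hs => by
    rcases Nat.eq_zero_or_pos s with rfl | h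
    · rw [hr0, hk0, P.distinctCount_zero]
    · exact hr s h hs
  have B : BlockStructure P m k' k iseq r := by
    rcases hk with ⟨hK, rfl, hk1⟩ | ⟨-, hmono, himage⟩
    · refine E.blockStructure_of_Kset_eq_empty hK hk1 fun s hs => ?_
      rw [hr' s hs]
      interval_cases s <;> simp [hk0, hk1, P.distinctCount_zero]
    · exact OddDropEnumeration.blockStructure E ⟨hk0, hmono, himage⟩ hr'
  refine ⟨⟨B.vertexEquiv E hn, fun {T T'} => ?_⟩⟩
  simp only [orbitGraph, SimpleGraph.fromRel_adj, (B.vertexEquiv E hn).injective.ne_iff,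
    B.vertexEquiv_rel_iff E hn]
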